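/- arXiv:math/0104163 — 2 statements merged into one kernel-verified Lean document; each statement's English description precedes it below -/
import Mathlib

section
/- Every two-sided ideal of the algebra T_n of upper triangular n×n complex matrices is principal, i.e., generated by a single element of T_n. -/
/-- The set of upper triangular `n × n` complex matrices. -/
def UT (n : ℕ) : Set (Matrix (Fin n) (Fin n) ℂ) :=
  {M | ∀ i j : Fin n, j < i → M i j = 0}

/-- `I` is a two-sided ideal of the (sub)algebra with underlying set `A`. -/
def IsIdealIn {n : ℕ} (A I : Set (Matrix (Fin n) (Fin n) ℂ)) : Prop :=
  I ⊆ A ∧ (0 : Matrix (Fin n) (Fin n) ℂ) ∈ I ∧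
    (∀ x ∈ I, ∀ y ∈ I, x + y ∈ I) ∧
    (∀ c : ℂ, ∀ x ∈ I, c • x ∈ I) ∧
    (∀ a ∈ A, ∀ x ∈ I, a * x ∈ I ∧ x * a ∈ I)

/-!
Since `T_n` contains the diagonal matrix units `E_ii`, an ideal `I` contains `E_ii M E_jj = M_ij E_ij`
for each of its elements `M`; hence `I` is spanned by the matrix units `E_ij` at the positions
where some element of `I` has a nonzero entry. The 0/1 matrix supported on these positions lies
in `I`, and by the same argument every ideal containing it contains all of these `E_ij`, hence `I`.
-/

open Matrix

lemma single_self_mem_UT {n : ℕ} (i : Fin n) (c : ℂ) : single i i c ∈ UT n := by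
  intro a b hba
  apply single_apply_of_ne
  rintro ⟨rfl, rfl⟩
  exact lt_irrefl _ hba

namespace IsIdealIn

variable {n : ℕ} {A I : Set (Matrix (Fin n) (Fin n) ℂ)}

lemma sum_mem (hI : IsIdealIn A I) {ι : Type*} (s : Finset ι) {f : ι → Matrix (Fin n) (Fin n) ℂ}
    (hf : ∀ a ∈ s, f a ∈ I) : ∑ a ∈ s, f a ∈ I :=
  Finset.sum_induction f (· ∈ I) (fun _ _ hx hy => hI.2.2.1 _ hx _ hy) hI.2.1 hf

lemma single_one_mem (hI : IsIdealIn A I) (hA : ∀ i, single i i 1 ∈ A)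
    {M : Matrix (Fin n) (Fin n) ℂ} (hM : M ∈ I) {i j : Fin n} (hij : M i j ≠ 0) :
    single i j 1 ∈ I := by
  have h := hI.2.2.2.1 (M i j)⁻¹ _ (hI.2.2.2.2 _ (hA j) _ (hI.2.2.2.2 _ (hA i) M hM).1).2
  rwa [single_mul_mul_single, one_mul, mul_one, smul_single, smul_eq_mul,
    inv_mul_cancel₀ hij] at h

lemma mem_of_forall_single_one_mem (hI : IsIdealIn A I) {M : Matrix (Fin n) (Fin n) ℂ}
    (hM : ∀ i j, M i j ≠ 0 → single i j 1 ∈ I) : M ∈ I := by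
  rw [matrix_eq_sum_single M]
  refine hI.sum_mem _ fun i _ => hI.sum_mem _ fun j _ => ?_
  by_cases hij : M i j = 0
  · simpa [hij] using hI.2.1
  · simpa [smul_single] using hI.2.2.2.1 (M i j) _ (hM i j hij)

end IsIdealIn

open Classical in
noncomputable def supportPattern {n : ℕ} (I : Set (Matrix (Fin n) (Fin n) ℂ)) :
    Matrix (Fin n) (Fin n) ℂ :=
  of fun i j => if ∃ M ∈ I, M i j ≠ 0 then 1 else 0

lemma supportPattern_apply_ne_zero_iff {n : ℕ} {I : Set (Matrix (Fin n) (Fin n) ℂ)}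
    {i j : Fin n} : supportPattern I i j ≠ 0 ↔ ∃ M ∈ I, M i j ≠ 0 := by
  by_cases h : ∃ M ∈ I, M i j ≠ 0 <;> simp [supportPattern, h]

/-- Every two-sided ideal of the algebra `T_n` of upper triangular complex
matrices is principal: it is the smallest two-sided ideal of `T_n` containing
some single element `g`. -/
theorem stmt_0 (n : ℕ) (I : Set (Matrix (Fin n) (Fin n) ℂ))
    (hI : IsIdealIn (UT n) I) :
    ∃ g ∈ I, I = ⋂₀ {J | IsIdealIn (UT n) J ∧ g ∈ J} := by
  have hA : ∀ i : Fin n, single i i 1 ∈ UT n := fun i => single_self_mem_UT i 1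
  have hgI : supportPattern I ∈ I := hI.mem_of_forall_single_one_mem fun i j hij => by
    obtain ⟨M, hM, hMij⟩ := supportPattern_apply_ne_zero_iff.1 hij
    exact hI.single_one_mem hA hM hMij
  refine ⟨supportPattern I, hgI, Set.Subset.antisymm ?_ fun M hM => hM I ⟨hI, hgI⟩⟩
  rintro M hM J ⟨hJ, hgJ⟩
  exact hJ.mem_of_forall_single_one_mem fun i j hij =>
    hJ.single_one_mem hA hgJ (supportPattern_apply_ne_zero_iff.2 ⟨M, hM, hij⟩)
end

section
/- The assignment α ↦ I[α] = {x ∈ T_n : x_{ij} = 0 whenever i > α(j)} is an inclusion-preserving injection from the order-preserving maps α : {0,…,n} → {0,…,n} with α(k) ≤ k into the set of two-sided ideals of T_n; that is, α ≤ β pointwise iff I[α] ⊆ I[β]. -/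
/-- The ideal `I[α]` of `T_n` associated with `α : {0,…,n} → {0,…,n}`.
(Matrix indices `Fin n` are thought of as `{1,…,n}` via `i ↦ i+1`.) -/
def Ialpha (n : ℕ) (α : Fin (n + 1) → Fin (n + 1)) :
    Set (Matrix (Fin n) (Fin n) ℂ) :=
  {x | x ∈ UT n ∧ ∀ i j : Fin n, (α j.succ : ℕ) < (i : ℕ) + 1 → x i j = 0}

lemma Ialpha_mono_of_le (n : ℕ) (α β : Fin (n + 1) → Fin (n + 1))
    (h : ∀ k, α k ≤ β k) : Ialpha n α ⊆ Ialpha n β := by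
  intro x hx
  refine ⟨hx.1, fun i j hij => hx.2 i j ?_⟩
  exact lt_of_le_of_lt (h j.succ) hij

lemma le_of_Ialpha_subset (n : ℕ) (α β : Fin (n + 1) → Fin (n + 1))
    (hα : ∀ k, α k ≤ k) (h : Ialpha n α ⊆ Ialpha n β) : ∀ k, α k ≤ β k := by
  intro k
  induction k using Fin.cases with
  | zero => exact le_trans (hα 0) (Fin.zero_le _)
  | succ j =>
    by_cases h0 : (α j.succ : ℕ) = 0
    · simp [Fin.le_def, h0]
    · have hpos : 0 < (α j.succ : ℕ) := Nat.pos_of_ne_zero h0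
      have hle : (α j.succ : ℕ) ≤ (j : ℕ) + 1 := by
        have := hα j.succ
        simpa [Fin.le_def, Fin.val_succ] using this
      have hin : (α j.succ : ℕ) - 1 < n := by omega
      set i : Fin n := ⟨(α j.succ : ℕ) - 1, hin⟩ with hi
      have hiv : (i : ℕ) + 1 = (α j.succ : ℕ) := by simp [hi]; omega
      set E : Matrix (Fin n) (Fin n) ℂ :=
        Matrix.of fun i' j' => if i' = i ∧ j' = j then (1:ℂ) else 0 with hE
      have hEmem : E ∈ Ialpha n α := by
        constructor
        · intro i' j' hlt
          simp only [hE, Matrix.of_apply, ite_eq_right_iff, and_imp]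
          rintro rfl rfl
          exact absurd hlt (by rw [Fin.lt_def]; omega)
        · intro i' j' hlt
          simp only [hE, Matrix.of_apply, ite_eq_right_iff, and_imp]
          rintro rfl rfl
          omega
      have hEβ := (h hEmem).2 i j
      by_contra hc
      have hc' : (β j.succ : ℕ) < (i : ℕ) + 1 := by
        rw [Fin.le_def] at hc; omega
      have := hEβ hc'
      simp [hE] at this

/-- The assignment `α ↦ I[α]` is an inclusion-preserving injection from the
order-preserving maps `α : {0,…,n} → {0,…,n}` with `α(k) ≤ k` into the set of
two-sided ideals of `T_n`: each `I[α]` is a two-sided ideal, inclusions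
correspond to pointwise domination, and the map is injective. -/
theorem stmt_15 (n : ℕ) :
    (∀ α : Fin (n + 1) → Fin (n + 1), Monotone α → (∀ k, α k ≤ k) →
      IsIdealIn (UT n) (Ialpha n α)) ∧
    (∀ α β : Fin (n + 1) → Fin (n + 1),
      Monotone α → (∀ k, α k ≤ k) → Monotone β → (∀ k, β k ≤ k) →
      (Ialpha n α ⊆ Ialpha n β ↔ ∀ k, α k ≤ β k)) ∧
    (∀ α β : Fin (n + 1) → Fin (n + 1),
      Monotone α → (∀ k, α k ≤ k) → Monotone β → (∀ k, β k ≤ k) →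
      Ialpha n α = Ialpha n β → α = β) := by
  refine ⟨?_, ?_, ?_⟩
  · intro α hmono hle
    refine ⟨fun x hx => hx.1, ⟨fun i j _ => rfl, fun i j _ => rfl⟩, ?_, ?_, ?_⟩
    · intro x hx y hy
      exact ⟨fun i j h => by simp [Matrix.add_apply, hx.1 i j h, hy.1 i j h],
             fun i j h => by simp [Matrix.add_apply, hx.2 i j h, hy.2 i j h]⟩
    · intro c x hx
      exact ⟨fun i j h => by simp [Matrix.smul_apply, hx.1 i j h],
             fun i j h => by simp [Matrix.smul_apply, hx.2 i j h]⟩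
    · intro a ha x hx
      constructor
      · constructor
        · intro i j hij
          rw [Matrix.mul_apply]
          apply Finset.sum_eq_zero
          intro k _
          rcases lt_or_ge (k : ℕ) (i : ℕ) with hk | hk
          · rw [ha i k (hk), zero_mul]
          · rw [hx.1 k j (lt_of_lt_of_le hij hk), mul_zero]
        · intro i j hij
          rw [Matrix.mul_apply]
          apply Finset.sum_eq_zero
          intro k _
          rcases lt_or_ge (k : ℕ) (i : ℕ) with hk | hk
          · rw [ha i k (hk), zero_mul]
          · rw [hx.2 k j (by omega), mul_zero]
      · constructor
        · intro i j hij
          rw [Matrix.mul_apply]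
          apply Finset.sum_eq_zero
          intro k _
          rcases lt_or_ge (j : ℕ) (k : ℕ) with hk | hk
          · rw [ha k j (hk), mul_zero]
          · rw [hx.1 i k (lt_of_le_of_lt hk hij), zero_mul]
        · intro i j hij
          rw [Matrix.mul_apply]
          apply Finset.sum_eq_zero
          intro k _
          rcases lt_or_ge (j : ℕ) (k : ℕ) with hk | hk
          · rw [ha k j (hk), mul_zero]
          · have hm : α k.succ ≤ α j.succ :=
              hmono (Fin.succ_le_succ_iff.mpr hk)
            rw [hx.2 i k (by rw [Fin.le_def] at hm; omega), zero_mul]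
  · intro α β hα1 hα2 hβ1 hβ2
    exact ⟨le_of_Ialpha_subset n α β hα2, Ialpha_mono_of_le n α β⟩
  · intro α β hα1 hα2 hβ1 hβ2 heq
    funext k
    exact le_antisymm
      (le_of_Ialpha_subset n α β hα2 (le_of_eq heq) k)
      (le_of_Ialpha_subset n β α hβ2 (ge_of_eq heq) k)
end
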